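/- Truncation error at N = N_δ with explicit constant: assume the sequence {μ_k/ξ_k} is monotone nonincreasing with μ_k/ξ_k → 0, and let δ > 0 satisfy δ < 1/ξ_0 (so N_δ ≥ 1). Then ε_δ(A,W,G̃_{N_δ},Ψ̃_{N_δ})_H ≤ ( μ_{N_δ}²/ξ_{N_δ}² + μ_{N_δ−1}²/ξ_{N_δ−1}² )^{1/2} ≤ K_δ · μ_{N_δ}/ξ_{N_δ}, where K_δ := ( 1 + ( (ξ_{N_δ}/μ_{N_δ}) · (μ_{N_δ−1}/ξ_{N_δ−1}) )² )^{1/2}. -/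

import Mathlib

noncomputable section

open Filter
open scoped ENNReal RealInnerProductSpace

variable {H : Type*} [NormedAddCommGroup H] [InnerProductSpace ℝ H] [CompleteSpace H]

/-- `f` belongs to the source set `W`. -/
def MemW (w : ℕ → H) (ξ : ℕ → ℝ) (f : H) : Prop :=
  Summable fun k => ξ k ^ 2 * ⟪f, w k⟫ ^ 2

/-- The `W`-norm of `f`. -/
def normW (w : ℕ → H) (ξ : ℕ → ℝ) (f : H) : ℝ :=
  Real.sqrt (∑' k, ξ k ^ 2 * ⟪f, w k⟫ ^ 2)

/-- The unbounded operator `A`, defined spectrally by `A f = ∑ μ_k ⟨f, w_k⟩ w_k`. -/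
def opA (w : ℕ → H) (μ : ℕ → ℝ) (f : H) : H :=
  ∑' k, (μ k * ⟪f, w k⟫) • w k

/-- The worst case recovery error `ε_δ(A, W, G, Ψ)_H` of the pair `(G, Ψ)`. -/
def recErr (w : ℕ → H) (μ ξ : ℕ → ℝ) (δ : ℝ) {N : ℕ}
    (G : H → Fin N → ℝ) (Ψ : (Fin N → ℝ) → H) : ℝ≥0∞ :=
  ⨆ (f : H) (_ : MemW w ξ f ∧ normW w ξ f ≤ 1) (fδ : H) (_ : ‖f - fδ‖ ≤ δ),
    ENNReal.ofReal ‖opA w μ f - Ψ (G fδ)‖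

/-- The `(N,δ)`-optimal recovery error `R_{N,δ}(A, W)_H`. -/
def Ropt (w : ℕ → H) (μ ξ : ℕ → ℝ) (δ : ℝ) (N : ℕ) : ℝ≥0∞ :=
  ⨅ (G : H → Fin N → ℝ) (_ : Continuous G) (Ψ : (Fin N → ℝ) → H),
    recErr w μ ξ δ G Ψ

/-- The `δ`-optimal recovery error `R_δ(A, W)_H`. -/
def RoptAll (w : ℕ → H) (μ ξ : ℕ → ℝ) (δ : ℝ) : ℝ≥0∞ :=
  ⨅ N : ℕ, Ropt w μ ξ δ N

/-- The critical index `N_δ = min {N ≥ 0 : ξ_N ≥ 1/δ}`. -/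
def Ncrit (ξ : ℕ → ℝ) (δ : ℝ) : ℕ := sInf {N : ℕ | 1 / δ ≤ ξ N}

/-- The information map of the truncation method: the first `N` Fourier coefficients. -/
def Gtrunc (w : ℕ → H) (N : ℕ) (f : H) : Fin N → ℝ := fun k => ⟪f, w k⟫

/-- The recovery algorithm of the truncation method. -/
def Psitrunc (w : ℕ → H) (μ : ℕ → ℝ) (N : ℕ) (x : Fin N → ℝ) : H :=
  ∑ k : Fin N, (μ k * x k) • w k

/-! Expand the error `A f - Ψ̃_N (G̃_N f^δ)` in the basis `w`. The first `N` coefficients are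
`μ_k ⟨f - f^δ, w_k⟩` with `μ_k ≤ μ_{N-1}`, so by Bessel they contribute at most `μ_{N-1}² δ²`;
the tail coefficients are `μ_k ⟨f, w_k⟩ = (μ_k/ξ_k) · ξ_k ⟨f, w_k⟩` with `μ_k/ξ_k ≤ μ_N/ξ_N`,
so they contribute at most `(μ_N/ξ_N)² ‖f‖_W²`. Minimality of `N = N_δ` gives
`ξ_{N-1} < 1/δ`, i.e. `μ_{N-1} δ ≤ μ_{N-1}/ξ_{N-1}`. -/

theorem Orthonormal.summable_smul_of_summable_sq {E : Type*} [NormedAddCommGroup E]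
    [InnerProductSpace ℝ E] [CompleteSpace E] {ι : Type*} {v : ι → E} (hv : Orthonormal ℝ v)
    {c : ι → ℝ} (hc : Summable fun i => c i ^ 2) : Summable fun i => c i • v i := by
  have := (hv.orthogonalFamily.summable_iff_norm_sq_summable c).2 (by simpa using hc)
  simpa [LinearIsometry.toSpanSingleton_apply] using this

theorem Orthonormal.hasSum_sq_of_hasSum {E : Type*} [NormedAddCommGroup E]
    [InnerProductSpace ℝ E] {ι : Type*} {v : ι → E} (hv : Orthonormal ℝ v) {c : ι → ℝ} {x : E}
    (h : HasSum (fun i => c i • v i) x) : HasSum (fun i => c i ^ 2) (‖x‖ ^ 2) := by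
  have hnorm : ∀ s : Finset ι, ‖∑ i ∈ s, c i • v i‖ ^ 2 = ∑ i ∈ s, c i ^ 2 := fun s => by
    simpa [LinearIsometry.toSpanSingleton_apply] using hv.orthogonalFamily.norm_sum c s
  exact (((continuous_norm.pow 2).tendsto x).comp h).congr hnorm

theorem hasSum_ite_lt {M : Type*} [AddCommMonoid M] [TopologicalSpace M] (g : ℕ → M) (N : ℕ) :
    HasSum (fun k => if k < N then g k else 0) (∑ k ∈ Finset.range N, g k) := by
  convert hasSum_sum_of_ne_finset_zero (L := SummationFilter.unconditional ℕ)
    (s := Finset.range N) (f := fun k => if k < N then g k else 0)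
    fun k hk => if_neg (by simpa using hk) using 1
  exact (Finset.sum_ite_of_true (fun k hk => Finset.mem_range.mp hk) g fun _ => 0).symm

theorem sq_mul_le_sq_div_mul {μ ξ : ℕ → ℝ} (hμ : ∀ k, 0 ≤ μ k) (hξ : ∀ k, 0 < ξ k)
    (hanti : Antitone fun k => μ k / ξ k) {N k : ℕ} (hNk : N ≤ k) (x : ℝ) :
    (μ k * x) ^ 2 ≤ (μ N / ξ N) ^ 2 * (ξ k ^ 2 * x ^ 2) := by
  have hξk := (hξ k).ne'
  calc (μ k * x) ^ 2 = (μ k / ξ k) ^ 2 * (ξ k ^ 2 * x ^ 2) := by field_simp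
    _ ≤ (μ N / ξ N) ^ 2 * (ξ k ^ 2 * x ^ 2) := by
      gcongr ?_ * _
      exact pow_le_pow_left₀ (div_nonneg (hμ k) (hξ k).le) (hanti hNk) 2

theorem Real.sqrt_sq_add_sq_eq_sqrt_one_add_mul {a : ℝ} (ha : 0 < a) (b : ℝ) :
    √(a ^ 2 + b ^ 2) = √(1 + (a⁻¹ * b) ^ 2) * a := by
  rw [← Real.sqrt_sq ha.le, ← Real.sqrt_mul (by positivity), Real.sqrt_sq ha.le]
  congr 1
  field_simp

theorem MemW.summable_sq_mul_inner {E : Type*} [NormedAddCommGroup E] [InnerProductSpace ℝ E]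
    {w : ℕ → E} {μ ξ : ℕ → ℝ} {f : E} (hμ : ∀ k, 0 ≤ μ k) (hξ : ∀ k, 0 < ξ k)
    (hanti : Antitone fun k => μ k / ξ k) (hf : MemW w ξ f) :
    Summable fun k => (μ k * ⟪f, w k⟫) ^ 2 :=
  Summable.of_nonneg_of_le (fun _ => sq_nonneg _)
    (fun k => sq_mul_le_sq_div_mul hμ hξ hanti (Nat.zero_le k) _) (hf.mul_left _)

section Truncation

variable {w : ℕ → H} {μ ξ : ℕ → ℝ} {f : H}

theorem hasSum_opA_sub_Psitrunc_Gtrunc (hw : Orthonormal ℝ w)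
    (hA : Summable fun k => (μ k * ⟪f, w k⟫) ^ 2) (N : ℕ) (fδ : H) :
    HasSum (fun k => (μ k * (⟪f, w k⟫ - if k < N then ⟪fδ, w k⟫ else 0)) • w k)
      (opA w μ f - Psitrunc w μ N (Gtrunc w N fδ)) := by
  have hPsi : Psitrunc w μ N (Gtrunc w N fδ) = ∑ k ∈ Finset.range N, (μ k * ⟪fδ, w k⟫) • w k :=
    Fin.sum_univ_eq_sum_range (fun k => (μ k * ⟪fδ, w k⟫) • w k) N
  rw [hPsi, opA]
  convert (hw.summable_smul_of_summable_sq hA).hasSum.sub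
    (hasSum_ite_lt (fun k => (μ k * ⟪fδ, w k⟫) • w k) N) using 2 with k
  split_ifs <;> simp [mul_sub, sub_smul]

theorem norm_opA_sub_Psitrunc_Gtrunc_sq_le (hw : Orthonormal ℝ w) (hμ : ∀ k, 0 ≤ μ k)
    (hμmono : Monotone μ) (hξ : ∀ k, 0 < ξ k) (hanti : Antitone fun k => μ k / ξ k)
    (hf : MemW w ξ f) (N : ℕ) (fδ : H) :
    ‖opA w μ f - Psitrunc w μ N (Gtrunc w N fδ)‖ ^ 2 ≤
      μ (N - 1) ^ 2 * ‖f - fδ‖ ^ 2 + (μ N / ξ N) ^ 2 * ∑' k, ξ k ^ 2 * ⟪f, w k⟫ ^ 2 := by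
  have hErr := hw.hasSum_sq_of_hasSum
    (hasSum_opA_sub_Psitrunc_Gtrunc hw (hf.summable_sq_mul_inner hμ hξ hanti) N fδ)
  have hHead := (hasSum_ite_lt (fun k => ⟪f - fδ, w k⟫ ^ 2) N).mul_left (μ (N - 1) ^ 2)
  have hTail := hf.hasSum.mul_left ((μ N / ξ N) ^ 2)
  have hTerm : ∀ k, (μ k * (⟪f, w k⟫ - if k < N then ⟪fδ, w k⟫ else 0)) ^ 2 ≤
      μ (N - 1) ^ 2 * (if k < N then ⟪f - fδ, w k⟫ ^ 2 else 0) +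
        (μ N / ξ N) ^ 2 * (ξ k ^ 2 * ⟪f, w k⟫ ^ 2) := by
    intro k
    split_ifs with hk
    · rw [← inner_sub_left, mul_pow]
      refine le_add_of_le_of_nonneg ?_ (by positivity)
      gcongr ?_ * _
      exact pow_le_pow_left₀ (hμ k) (hμmono (by omega)) 2
    · simpa using sq_mul_le_sq_div_mul hμ hξ hanti (not_lt.mp hk) ⟪f, w k⟫
  have hBessel : ∑ k ∈ Finset.range N, ⟪f - fδ, w k⟫ ^ 2 ≤ ‖f - fδ‖ ^ 2 := by
    simpa [real_inner_comm] using hw.sum_inner_products_le (s := Finset.range N) (f - fδ)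
  calc ‖opA w μ f - Psitrunc w μ N (Gtrunc w N fδ)‖ ^ 2
      ≤ μ (N - 1) ^ 2 * ∑ k ∈ Finset.range N, ⟪f - fδ, w k⟫ ^ 2 +
          (μ N / ξ N) ^ 2 * ∑' k, ξ k ^ 2 * ⟪f, w k⟫ ^ 2 := hasSum_le hTerm hErr (hHead.add hTail)
    _ ≤ _ := by gcongr

theorem recErr_Gtrunc_Psitrunc_le (hw : Orthonormal ℝ w) (hμ : ∀ k, 0 ≤ μ k)
    (hμmono : Monotone μ) (hξ : ∀ k, 0 < ξ k) (hanti : Antitone fun k => μ k / ξ k)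
    (δ : ℝ) (N : ℕ) :
    recErr w μ ξ δ (Gtrunc w N) (Psitrunc w μ N) ≤
      ENNReal.ofReal √((μ N / ξ N) ^ 2 + (μ (N - 1) * δ) ^ 2) := by
  refine iSup₂_le fun f ⟨hf, hfW⟩ => iSup₂_le fun fδ hfδ => ENNReal.ofReal_le_ofReal ?_
  have hfW' : ∑' k, ξ k ^ 2 * ⟪f, w k⟫ ^ 2 ≤ 1 := Real.sqrt_le_one.mp hfW
  refine Real.le_sqrt_of_sq_le ?_
  calc ‖opA w μ f - Psitrunc w μ N (Gtrunc w N fδ)‖ ^ 2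
      ≤ μ (N - 1) ^ 2 * ‖f - fδ‖ ^ 2 + (μ N / ξ N) ^ 2 * ∑' k, ξ k ^ 2 * ⟪f, w k⟫ ^ 2 :=
        norm_opA_sub_Psitrunc_Gtrunc_sq_le hw hμ hμmono hξ hanti hf N fδ
    _ ≤ μ (N - 1) ^ 2 * δ ^ 2 + (μ N / ξ N) ^ 2 * 1 := by gcongr
    _ = (μ N / ξ N) ^ 2 + (μ (N - 1) * δ) ^ 2 := by ring

end Truncation

theorem xi_Ncrit_sub_one_lt {ξ : ℕ → ℝ} {δ : ℝ} (h0 : ξ 0 < 1 / δ) :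
    ξ (Ncrit ξ δ - 1) < 1 / δ := by
  rcases Nat.eq_zero_or_pos (Ncrit ξ δ) with h | h
  · simpa [h] using h0
  · exact not_le.mp (Nat.notMem_of_lt_sInf (Nat.sub_lt h one_pos))

theorem stmt7_general
    (w : ℕ → H) (hw_on : Orthonormal ℝ w)
    (μ ξ : ℕ → ℝ)
    (hμ0 : 0 < μ 0) (hμmono : Monotone μ)
    (hξ0 : 0 < ξ 0) (hξmono : Monotone ξ)
    (hanti : Antitone fun k => μ k / ξ k) :
    ∀ δ : ℝ, 0 < δ → δ < 1 / ξ 0 →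
      recErr w μ ξ δ (Gtrunc w (Ncrit ξ δ)) (Psitrunc w μ (Ncrit ξ δ)) ≤
          ENNReal.ofReal (Real.sqrt
            ((μ (Ncrit ξ δ) / ξ (Ncrit ξ δ)) ^ 2 +
              (μ (Ncrit ξ δ - 1) / ξ (Ncrit ξ δ - 1)) ^ 2)) ∧
        ENNReal.ofReal (Real.sqrt
            ((μ (Ncrit ξ δ) / ξ (Ncrit ξ δ)) ^ 2 +
              (μ (Ncrit ξ δ - 1) / ξ (Ncrit ξ δ - 1)) ^ 2)) ≤
          ENNReal.ofReal (Real.sqrt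
              (1 + (ξ (Ncrit ξ δ) / μ (Ncrit ξ δ) *
                (μ (Ncrit ξ δ - 1) / ξ (Ncrit ξ δ - 1))) ^ 2) *
            (μ (Ncrit ξ δ) / ξ (Ncrit ξ δ))) := by
  intro δ hδ hδξ
  have hμ : ∀ k, 0 < μ k := fun k => hμ0.trans_le (hμmono k.zero_le)
  have hξ : ∀ k, 0 < ξ k := fun k => hξ0.trans_le (hξmono k.zero_le)
  set N := Ncrit ξ δ
  have hδN : δ < 1 / ξ (N - 1) :=
    (lt_one_div (hξ _) hδ).mp (xi_Ncrit_sub_one_lt ((lt_one_div (hξ 0) hδ).mpr hδξ))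
  have hμδ : μ (N - 1) * δ ≤ μ (N - 1) / ξ (N - 1) := by
    rw [div_eq_mul_one_div]
    exact mul_le_mul_of_nonneg_left hδN.le (hμ _).le
  constructor
  · refine (recErr_Gtrunc_Psitrunc_le hw_on (fun k => (hμ k).le) hμmono hξ hanti δ N).trans ?_
    gcongr
    exact mul_nonneg (hμ _).le hδ.le
  · rw [← inv_div (μ N) (ξ N),
      ← Real.sqrt_sq_add_sq_eq_sqrt_one_add_mul (div_pos (hμ N) (hξ N))]

/-- truncation error at `N = N_δ` with explicit constant `K_δ`. -/
theorem stmt7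
    (w : ℕ → H) (hw_on : Orthonormal ℝ w)
    (hw_dense : Dense (Submodule.span ℝ (Set.range w) : Set H))
    (μ ξ : ℕ → ℝ)
    (hμ0 : 0 < μ 0) (hμmono : Monotone μ) (hμtop : Tendsto μ atTop atTop)
    (hξ0 : 0 < ξ 0) (hξmono : Monotone ξ) (hξtop : Tendsto ξ atTop atTop)
    (hratio : Tendsto (fun k => μ k / ξ k) atTop (nhds 0))
    (hanti : Antitone fun k => μ k / ξ k) :
    ∀ δ : ℝ, 0 < δ → δ < 1 / ξ 0 →
      recErr w μ ξ δ (Gtrunc w (Ncrit ξ δ)) (Psitrunc w μ (Ncrit ξ δ)) ≤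
          ENNReal.ofReal (Real.sqrt
            ((μ (Ncrit ξ δ) / ξ (Ncrit ξ δ)) ^ 2 +
              (μ (Ncrit ξ δ - 1) / ξ (Ncrit ξ δ - 1)) ^ 2)) ∧
        ENNReal.ofReal (Real.sqrt
            ((μ (Ncrit ξ δ) / ξ (Ncrit ξ δ)) ^ 2 +
              (μ (Ncrit ξ δ - 1) / ξ (Ncrit ξ δ - 1)) ^ 2)) ≤
          ENNReal.ofReal (Real.sqrt
              (1 + (ξ (Ncrit ξ δ) / μ (Ncrit ξ δ) *
                (μ (Ncrit ξ δ - 1) / ξ (Ncrit ξ δ - 1))) ^ 2) *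
            (μ (Ncrit ξ δ) / ξ (Ncrit ξ δ))) :=
  stmt7_general w hw_on μ ξ hμ0 hμmono hξ0 hξmono hanti
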